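/- arXiv:2106.10663 — 5 statements merged into one kernel-verified Lean document; each statement's English description precedes it below -/
import Mathlib

section
/- Let d ≥ 1 and let C₀ ⊆ ℝ^d be a compact convex set with 0 in its interior, and let C : ℝ^d → Set(ℝ^d) be the constant set-valued map C(x) = C₀ for all x. Then for all x, y ∈ ℝ^d the geodesic distance equals the Minkowski gauge of the displacement: d_C(x,y) = gauge_{C₀}(y − x), where gauge_{C₀}(v) = inf{t > 0 : v ∈ t·C₀}. -/
open MeasureTheory ENNReal

/-- An admissible trajectory from `x` to `y` in time `T > 0` for the set-valued map `C`:
a Lipschitz curve `X : [0,T] → ℝ^d` with `X 0 = x`, `X T = y`, and derivative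
`X'(t) ∈ C(X(t))` for a.e. `t ∈ [0,T]`. -/
def IsAdmissibleTraj {d : ℕ} (C : EuclideanSpace ℝ (Fin d) → Set (EuclideanSpace ℝ (Fin d)))
    (x y : EuclideanSpace ℝ (Fin d)) (T : ℝ) : Prop :=
  0 < T ∧ ∃ X : ℝ → EuclideanSpace ℝ (Fin d),
    (∃ L : NNReal, LipschitzOnWith L X (Set.Icc 0 T)) ∧
    X 0 = x ∧ X T = y ∧
    ∀ᵐ t ∂(volume.restrict (Set.Icc 0 T)), ∃ v ∈ C (X t), HasDerivAt X v t

/-- The geodesic distance `d_C(x,y)`: the infimum of times of admissible trajectories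
from `x` to `y` (equals `∞` if no admissible trajectory exists). -/
noncomputable def geodDist {d : ℕ}
    (C : EuclideanSpace ℝ (Fin d) → Set (EuclideanSpace ℝ (Fin d)))
    (x y : EuclideanSpace ℝ (Fin d)) : ℝ≥0∞ :=
  ⨅ (T : ℝ) (_ : IsAdmissibleTraj C x y T), ENNReal.ofReal T

/-!
A trajectory with velocities in a closed convex set `C` covers, in time `T`, a displacement in
`T • C`: for a continuous functional `φ`, the fundamental theorem of calculus for the Lipschitz,
hence absolutely continuous, function `φ ∘ X` bounds `φ (y - x)` by `T * sup φ(C)`, and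
Hahn–Banach separation concludes. Conversely, if `y - x ∈ T • C` the straight line at constant
velocity `T⁻¹ • (y - x)` is admissible. So the admissible times are exactly the set whose
infimum is the gauge.
-/

open Set
open scoped Pointwise

theorem sub_le_mul_of_lipschitzOnWith_of_ae_deriv_le {f : ℝ → ℝ} {L : NNReal} {a b u : ℝ}
    (hab : a ≤ b) (hf : LipschitzOnWith L f (Icc a b))
    (hderiv : ∀ᵐ t ∂volume.restrict (Icc a b), deriv f t ≤ u) :
    f b - f a ≤ u * (b - a) := by
  have hac : AbsolutelyContinuousOnInterval f a b := by
    refine LipschitzOnWith.absolutelyContinuousOnInterval (K := L) ?_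
    rwa [uIcc_of_le hab]
  calc f b - f a = ∫ t in a..b, deriv f t := hac.integral_deriv_eq_sub.symm
    _ ≤ ∫ _ in a..b, u :=
      intervalIntegral.integral_mono_ae_restrict hab hac.intervalIntegrable_deriv
        intervalIntegrable_const hderiv
    _ = u * (b - a) := by simp [mul_comm]

theorem Convex.sub_mem_smul_of_ae_hasDerivAt_mem {E : Type*} [NormedAddCommGroup E]
    [NormedSpace ℝ E] {C : Set E} (hconv : Convex ℝ C) (hC : IsClosed C) {X : ℝ → E}
    {L : NNReal} {T : ℝ} (hT : 0 < T) (hX : LipschitzOnWith L X (Icc 0 T))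
    (hderiv : ∀ᵐ t ∂volume.restrict (Icc 0 T), ∃ v ∈ C, HasDerivAt X v t) :
    X T - X 0 ∈ T • C := by
  rw [mem_smul_set_iff_inv_smul_mem₀ hT.ne']
  by_contra hnot
  obtain ⟨φ, u, hφC, hφu⟩ := geometric_hahn_banach_closed_point hconv hC hnot
  have hφderiv : ∀ᵐ t ∂volume.restrict (Icc 0 T), deriv (φ ∘ X) t ≤ u :=
    hderiv.mono fun t ⟨v, hvC, hv⟩ => by
      rw [(φ.hasFDerivAt.comp_hasDerivAt t hv).deriv]
      exact (hφC v hvC).le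
  have hφX : φ (X T) - φ (X 0) ≤ u * (T - 0) :=
    sub_le_mul_of_lipschitzOnWith_of_ae_deriv_le hT.le (φ.lipschitz.comp_lipschitzOnWith hX)
      hφderiv
  rw [map_smul, map_sub, smul_eq_mul, lt_inv_mul_iff₀ hT] at hφu
  linarith

theorem isAdmissibleTraj_const_of_sub_mem_smul {d : ℕ} {C : Set (EuclideanSpace ℝ (Fin d))}
    {x y : EuclideanSpace ℝ (Fin d)} {T : ℝ} (hT : 0 < T) (h : y - x ∈ T • C) :
    IsAdmissibleTraj (fun _ => C) x y T := by
  obtain ⟨v, hvC, hv⟩ := h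
  refine ⟨hT, fun t => x + t • v, ⟨‖v‖₊, ?_⟩, by simp, by simp [hv], ?_⟩
  · refine (LipschitzWith.of_dist_le_mul fun s t => ?_).lipschitzOnWith
    simp [dist_eq_norm, ← sub_smul, norm_smul, mul_comm]
  · exact Filter.Eventually.of_forall fun t =>
      ⟨v, hvC, by simpa using ((hasDerivAt_id t).smul_const v).const_add x⟩

theorem isAdmissibleTraj_const_iff {d : ℕ} {C : Set (EuclideanSpace ℝ (Fin d))}
    (hconv : Convex ℝ C) (hC : IsClosed C) {x y : EuclideanSpace ℝ (Fin d)} {T : ℝ} :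
    IsAdmissibleTraj (fun _ => C) x y T ↔ 0 < T ∧ y - x ∈ T • C := by
  refine ⟨?_, fun ⟨hT, h⟩ => isAdmissibleTraj_const_of_sub_mem_smul hT h⟩
  rintro ⟨hT, X, ⟨L, hX⟩, rfl, rfl, hderiv⟩
  exact ⟨hT, hconv.sub_mem_smul_of_ae_hasDerivAt_mem hC hT hX hderiv⟩

theorem geodDist_const_eq_ofReal_gauge {d : ℕ} {C : Set (EuclideanSpace ℝ (Fin d))}
    (hconv : Convex ℝ C) (hC : IsClosed C) (habs : Absorbent ℝ C)
    (x y : EuclideanSpace ℝ (Fin d)) :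
    geodDist (fun _ => C) x y = ENNReal.ofReal (gauge C (y - x)) := by
  -- `ENNReal.ofReal_iInf` needs a nonempty index: an empty infimum is `0` in `ℝ` but `∞` in `ℝ≥0∞`.
  have : Nonempty {r ∈ Ioi (0 : ℝ) | y - x ∈ r • C} := habs.gauge_set_nonempty.to_subtype
  rw [gauge_def, sInf_eq_iInf', ENNReal.ofReal_iInf, iInf_subtype]
  simp only [geodDist, isAdmissibleTraj_const_iff hconv hC, mem_Ioi, mem_ofPred_eq, iInf_and]

theorem stmt_3_general (d : ℕ) (C₀ : Set (EuclideanSpace ℝ (Fin d)))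
    (hcomp : IsCompact C₀) (hconv : Convex ℝ C₀) (h0 : (0 : EuclideanSpace ℝ (Fin d)) ∈ interior C₀) :
    ∀ x y : EuclideanSpace ℝ (Fin d),
      geodDist (fun _ => C₀) x y = ENNReal.ofReal (gauge C₀ (y - x)) :=
  geodDist_const_eq_ofReal_gauge hconv hcomp.isClosed
    (absorbent_nhds_zero (mem_interior_iff_mem_nhds.1 h0))

theorem stmt_3 (d : ℕ) (hd : 1 ≤ d) (C₀ : Set (EuclideanSpace ℝ (Fin d)))
    (hcomp : IsCompact C₀) (hconv : Convex ℝ C₀) (h0 : (0 : EuclideanSpace ℝ (Fin d)) ∈ interior C₀) :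
    ∀ x y : EuclideanSpace ℝ (Fin d),
      geodDist (fun _ => C₀) x y = ENNReal.ofReal (gauge C₀ (y - x)) :=
  stmt_3_general d C₀ hcomp hconv h0
end

section
/- Let d ≥ 1, let Ω ⊆ ℝ^d be a bounded measurable set, let ρ : ℝ^d → ℝ be a nonnegative integrable function, and let dist : ℝ^d × ℝ^d → ℝ be a continuous nonnegative function. Then the K-means functional I(y_1,…,y_K) = ∫_Ω (min_{j=1,…,K} dist(x,y_j))² ρ(x) dx is a continuous function of (y_1,…,y_K) ∈ (ℝ^d)^K. -/
/-!
The integrand `(y, x) ↦ (min_j dst x (y j))² ρ x` is a continuous function of `(y, x)` times an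
integrable weight. For `y` in a compact neighbourhood of `y₀` and `x` in the compact closure of `Ω`,
the continuous factor is bounded by a constant `C`, so `C |ρ|` dominates the integrand and dominated
convergence gives continuity at `y₀`.
-/

open MeasureTheory Set Topology Function

theorem continuous_ciInf_of_finite {X L ι : Type*} [TopologicalSpace X]
    [ConditionallyCompleteLinearOrder L] [TopologicalSpace L] [OrderClosedTopology L] [Finite ι]
    {f : ι → X → L} (hf : ∀ i, Continuous (f i)) : Continuous fun x ↦ ⨅ i, f i x := by
  cases isEmpty_or_nonempty ι
  · simp only [iInf_of_isEmpty]
    exact continuous_const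
  · have := Fintype.ofFinite ι
    simp only [← Finset.inf'_univ_eq_ciInf]
    exact Continuous.finset_inf'_apply Finset.univ_nonempty fun i _ ↦ hf i

theorem ae_restrict_mem_closure {X : Type*} [TopologicalSpace X] [MeasurableSpace X]
    [OpensMeasurableSpace X] (μ : Measure X) (s : Set X) : ∀ᵐ x ∂μ.restrict s, x ∈ closure s :=
  ae_restrict_of_ae_restrict_of_subset subset_closure (ae_restrict_mem isClosed_closure.measurableSet)

theorem continuous_setIntegral_mul_of_isCompact_closure {X Y : Type*} [TopologicalSpace X]
    [MeasurableSpace X] [OpensMeasurableSpace X] [TopologicalSpace Y] [WeaklyLocallyCompactSpace Y]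
    [FirstCountableTopology Y] {μ : Measure X} {s : Set X} (hs : IsCompact (closure s))
    {f : Y → X → ℝ} (hf : Continuous (uncurry f)) {ρ : X → ℝ} (hρ : Integrable ρ μ) :
    Continuous fun y ↦ ∫ x in s, f y x * ρ x ∂μ := by
  refine continuous_iff_continuousAt.2 fun y₀ ↦ ?_
  obtain ⟨L, hL, hLy₀⟩ := exists_compact_mem_nhds y₀
  obtain ⟨C, hC⟩ := (hL.prod hs).exists_bound_of_continuousOn hf.continuousOn
  refine continuousAt_of_dominated (bound := fun x ↦ C * ‖ρ x‖) ?_ ?_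
    (hρ.norm.restrict.const_mul C) ?_
  · exact .of_forall fun y ↦
      (hf.comp (Continuous.prodMk_right y)).measurable.aestronglyMeasurable.mul hρ.1.restrict
  · filter_upwards [hLy₀] with y hy
    filter_upwards [ae_restrict_mem_closure μ s] with x hx
    rw [norm_mul]
    exact mul_le_mul_of_nonneg_right (hC (y, x) ⟨hy, hx⟩) (norm_nonneg _)
  · exact .of_forall fun x ↦ ((hf.comp (Continuous.prodMk_left x)).mul continuous_const).continuousAt

theorem stmt_9_general (d K : ℕ)
    (Ω : Set (EuclideanSpace ℝ (Fin d)))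
    (hΩb : Bornology.IsBounded Ω)
    (ρ : EuclideanSpace ℝ (Fin d) → ℝ) (hρi : Integrable ρ)
    (dst : EuclideanSpace ℝ (Fin d) → EuclideanSpace ℝ (Fin d) → ℝ)
    (hdstc : Continuous fun p : EuclideanSpace ℝ (Fin d) × EuclideanSpace ℝ (Fin d) => dst p.1 p.2) :
    Continuous fun y : Fin K → EuclideanSpace ℝ (Fin d) =>
      ∫ x in Ω, (⨅ j, dst x (y j)) ^ 2 * ρ x := by
  have hmin : Continuous fun p : (Fin K → EuclideanSpace ℝ (Fin d)) × EuclideanSpace ℝ (Fin d) ↦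
      ⨅ j, dst p.2 (p.1 j) :=
    continuous_ciInf_of_finite fun j ↦ hdstc.comp (continuous_snd.prodMk
      ((continuous_apply j).comp continuous_fst))
  exact continuous_setIntegral_mul_of_isCompact_closure hΩb.isCompact_closure (hmin.pow 2) hρi

theorem stmt_9 (d K : ℕ) (hd : 1 ≤ d) (hK : 0 < K)
    (Ω : Set (EuclideanSpace ℝ (Fin d)))
    (hΩb : Bornology.IsBounded Ω) (hΩm : MeasurableSet Ω)
    (ρ : EuclideanSpace ℝ (Fin d) → ℝ) (hρ0 : ∀ x, 0 ≤ ρ x) (hρi : Integrable ρ)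
    (dst : EuclideanSpace ℝ (Fin d) → EuclideanSpace ℝ (Fin d) → ℝ)
    (hdstc : Continuous fun p : EuclideanSpace ℝ (Fin d) × EuclideanSpace ℝ (Fin d) => dst p.1 p.2)
    (hdst0 : ∀ x y, 0 ≤ dst x y) :
    Continuous fun y : Fin K → EuclideanSpace ℝ (Fin d) =>
      ∫ x in Ω, (⨅ j, dst x (y j)) ^ 2 * ρ x :=
  stmt_9_general d K Ω hΩb ρ hρi dst hdstc
end

section
/- Let d ≥ 1, let Ω ⊆ ℝ^d be a bounded measurable set, let ρ : ℝ^d → ℝ be a nonnegative integrable function, and define F(y_1,…,y_K) = ∫_Ω min_{k=1,…,K} ‖x − y_k‖² ρ(x) dx. Suppose (y_1,…,y_K) ∈ (ℝ^d)^K is a local minimizer of F, and that each tie-broken Voronoi cell V_k = {x ∈ Ω : ‖x − y_k‖ ≤ ‖x − y_j‖ for all j, and ‖x − y_k‖ < ‖x − y_j‖ for all j < k} satisfies ∫_{V_k} ρ(x) dx > 0. Then each generator coincides with the centroid of its own cell: y_k = (∫_{V_k} x ρ(x) dx)/(∫_{V_k} ρ(x) dx) for every k = 1, …, K, i.e. {V_k}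 is a centroidal Voronoi tessellation. -/
/-!
Move the generator `y k` to `y k + t • v`. Keeping every point assigned to its old generator
can only overestimate the new energy, and for that assignment the energy changes exactly by
`t ^ 2 ‖v‖² M - 2 t ⟪v, w⟫`, where `M = ∫_{V_k} ρ` and `w = ∫_{V_k} ρ(x) (x - y k)`. At a local
minimum this quadratic in `t` therefore has a local minimum at `0`, so its derivative
`-2 ⟪v, w⟫` vanishes; with `v = w` this gives `w = 0`, i.e. `M • y k = ∫_{V_k} ρ(x) x`.
-/

open MeasureTheory RealInnerProductSpace Function

/-- The tie-broken Euclidean Voronoi cell of the generator `y k` in `Ω`: points of `Ω`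
whose Euclidean distance to `y k` is minimal among all generators, with ties assigned
to the smallest index. -/
def euclVoronoi {d K : ℕ} (Ω : Set (EuclideanSpace ℝ (Fin d)))
    (y : Fin K → EuclideanSpace ℝ (Fin d)) (k : Fin K) : Set (EuclideanSpace ℝ (Fin d)) :=
  {x ∈ Ω | (∀ j, ‖x - y k‖ ≤ ‖x - y j‖) ∧ ∀ j, j < k → ‖x - y k‖ < ‖x - y j‖}

noncomputable def kMeansEnergy {d K : ℕ} (Ω : Set (EuclideanSpace ℝ (Fin d)))
    (ρ : EuclideanSpace ℝ (Fin d) → ℝ) (z : Fin K → EuclideanSpace ℝ (Fin d)) : ℝ :=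
  ∫ x in Ω, (⨅ k, ‖x - z k‖) ^ 2 * ρ x

lemma eq_zero_of_isLocalMin_sq_mul_sub {a b : ℝ}
    (h : IsLocalMin (fun t : ℝ => t ^ 2 * a - 2 * t * b) 0) : b = 0 := by
  have := h.hasDerivAt_eq_zero
    (((hasDerivAt_pow 2 0).mul_const a).sub (((hasDerivAt_id 0).const_mul 2).mul_const b))
  simpa using this

lemma continuous_iInf_norm_sub {ι E : Type*} [Fintype ι] [Nonempty ι]
    [SeminormedAddCommGroup E] (z : ι → E) : Continuous fun x => ⨅ j, ‖x - z j‖ := by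
  simp_rw [← Finset.inf'_univ_eq_ciInf]
  exact Continuous.finset_inf'_apply _ fun j _ => by fun_prop

section IntegrableOnBounded

variable {X E : Type*} [MetricSpace X] [ProperSpace X] [MeasurableSpace X]
  [OpensMeasurableSpace X] [NormedAddCommGroup E] [NormedSpace ℝ E]
  [SecondCountableTopologyEither X E] {μ : Measure X} {ρ : X → ℝ} {S : Set X}

lemma MeasureTheory.Integrable.integrableOn_mul_of_isBounded (hρ : Integrable ρ μ) {g : X → ℝ}
    (hg : Continuous g) (hS : Bornology.IsBounded S) (hSm : MeasurableSet S) :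
    IntegrableOn (fun x => g x * ρ x) S μ :=
  hρ.integrableOn.continuousOn_mul_of_subset hg.continuousOn hS.isCompact_closure hSm
    subset_closure

lemma MeasureTheory.Integrable.integrableOn_smul_of_isBounded (hρ : Integrable ρ μ) {g : X → E}
    (hg : Continuous g) (hS : Bornology.IsBounded S) (hSm : MeasurableSet S) :
    IntegrableOn (fun x => ρ x • g x) S μ :=
  hρ.integrableOn.smul_continuousOn_of_subset hg.continuousOn hSm hS.isCompact_closure
    subset_closure

end IntegrableOnBounded

section Voronoi

variable {d K : ℕ} {Ω : Set (EuclideanSpace ℝ (Fin d))} {x : EuclideanSpace ℝ (Fin d)}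

lemma measurableSet_euclVoronoi (hΩ : MeasurableSet Ω) (y : Fin K → EuclideanSpace ℝ (Fin d))
    (k : Fin K) : MeasurableSet (euclVoronoi Ω y k) := by
  refine hΩ.inter (MeasurableSet.inter ?_ ?_)
  · show MeasurableSet {x | ∀ j, _}
    rw [Set.ofPred_forall]
    exact .iInter fun j => measurableSet_le (by fun_prop) (by fun_prop)
  · show MeasurableSet {x | ∀ j, _}
    simp only [Set.ofPred_forall]
    exact .iInter fun j => .iInter fun _ => measurableSet_lt (by fun_prop) (by fun_prop)

lemma exists_mem_euclVoronoi [Nonempty (Fin K)] (hx : x ∈ Ω)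
    (y : Fin K → EuclideanSpace ℝ (Fin d)) : ∃ k, x ∈ euclVoronoi Ω y k := by
  obtain ⟨j, hj⟩ := Finite.exists_min fun j => ‖x - y j‖
  obtain ⟨k, hk, hk_least⟩ := wellFounded_lt.has_min {k | ∀ i, ‖x - y k‖ ≤ ‖x - y i‖} ⟨j, hj⟩
  refine ⟨k, hx, hk, fun i hik => lt_of_not_ge fun hle => hk_least i ?_ hik⟩
  exact fun i' => hle.trans (hk i')

lemma iInf_norm_sub_eq_of_mem_euclVoronoi {y : Fin K → EuclideanSpace ℝ (Fin d)} {k : Fin K} (hx : x ∈ euclVoronoi Ω y k) :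
    ⨅ j, ‖x - y j‖ = ‖x - y k‖ :=
  have : Nonempty (Fin K) := ⟨k⟩
  le_antisymm (ciInf_le (Finite.bddBelow_range _) k) (le_ciInf hx.2.1)

lemma sq_iInf_norm_sub_update_le (hx : x ∈ Ω) (y : Fin K → EuclideanSpace ℝ (Fin d)) (k : Fin K) (v : EuclideanSpace ℝ (Fin d))
    (t : ℝ) :
    (⨅ j, ‖x - update y k (y k + t • v) j‖) ^ 2 ≤ (⨅ j, ‖x - y j‖) ^ 2 +
      (euclVoronoi Ω y k).indicator (fun x => t ^ 2 * ‖v‖ ^ 2 - 2 * t * ⟪v, x - y k⟫) x := by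
  have : Nonempty (Fin K) := ⟨k⟩
  have hle : ∀ i, (⨅ j, ‖x - update y k (y k + t • v) j‖) ^ 2 ≤
      ‖x - update y k (y k + t • v) i‖ ^ 2 := fun i =>
    pow_le_pow_left₀ (Real.iInf_nonneg fun _ => norm_nonneg _)
      (ciInf_le (Finite.bddBelow_range _) i) 2
  by_cases hxk : x ∈ euclVoronoi Ω y k
  · rw [Set.indicator_of_mem hxk, iInf_norm_sub_eq_of_mem_euclVoronoi hxk]
    calc _ ≤ ‖x - (y k + t • v)‖ ^ 2 := by simpa using hle k
      _ = _ := by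
        rw [← sub_sub, norm_sub_sq_real, real_inner_smul_right, norm_smul, mul_pow,
          Real.norm_eq_abs, sq_abs, real_inner_comm]
        ring
  · obtain ⟨j, hj⟩ := exists_mem_euclVoronoi hx y
    have hjk : j ≠ k := by rintro rfl; exact hxk hj
    rw [Set.indicator_of_notMem hxk, add_zero, iInf_norm_sub_eq_of_mem_euclVoronoi hj]
    simpa [update_of_ne hjk] using hle j

end Voronoi

section FirstVariation

variable {d K : ℕ} {Ω : Set (EuclideanSpace ℝ (Fin d))} {ρ : EuclideanSpace ℝ (Fin d) → ℝ}

lemma kMeansEnergy_update_le (hΩb : Bornology.IsBounded Ω) (hΩm : MeasurableSet Ω)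
    (hρ0 : ∀ x, 0 ≤ ρ x) (hρi : Integrable ρ) (y : Fin K → EuclideanSpace ℝ (Fin d))
    (k : Fin K) (v : EuclideanSpace ℝ (Fin d)) (t : ℝ) :
    kMeansEnergy Ω ρ (update y k (y k + t • v)) ≤ kMeansEnergy Ω ρ y +
      (t ^ 2 * (‖v‖ ^ 2 * ∫ x in euclVoronoi Ω y k, ρ x) -
        2 * t * ⟪v, ∫ x in euclVoronoi Ω y k, ρ x • (x - y k)⟫) := by
  have : Nonempty (Fin K) := ⟨k⟩
  set S := euclVoronoi Ω y k
  have hSm : MeasurableSet S := measurableSet_euclVoronoi hΩm y k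
  have hSΩ : S ⊆ Ω := fun x hx => hx.1
  set q := fun x => (t ^ 2 * ‖v‖ ^ 2 - 2 * t * ⟪v, x - y k⟫) * ρ x
  have hq : IntegrableOn q S := hρi.integrableOn_mul_of_isBounded (by fun_prop) (hΩb.subset hSΩ) hSm
  have hqΩ : IntegrableOn (S.indicator q) Ω := (hq.integrable_indicator hSm).integrableOn
  have hρx : IntegrableOn (fun x => ρ x • (x - y k)) S :=
    hρi.integrableOn_smul_of_isBounded (by fun_prop) (hΩb.subset hSΩ) hSm
  have hq_int : ∫ x in S, q x =
      t ^ 2 * (‖v‖ ^ 2 * ∫ x in S, ρ x) - 2 * t * ⟪v, ∫ x in S, ρ x • (x - y k)⟫ := by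
    have hq_eq : q = fun x => t ^ 2 * ‖v‖ ^ 2 * ρ x - 2 * t * ⟪v, ρ x • (x - y k)⟫ := by
      funext x; simp only [q, real_inner_smul_right]; ring
    rw [hq_eq, integral_sub (hρi.integrableOn.const_mul _) ((hρx.const_inner v).const_mul _),
      integral_const_mul, integral_const_mul, integral_inner hρx]
    ring
  have henergy : ∀ z : Fin K → EuclideanSpace ℝ (Fin d),
      IntegrableOn (fun x => (⨅ j, ‖x - z j‖) ^ 2 * ρ x) Ω := fun z =>
    hρi.integrableOn_mul_of_isBounded ((continuous_iInf_norm_sub z).pow 2) hΩb hΩm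
  calc kMeansEnergy Ω ρ (update y k (y k + t • v))
      ≤ ∫ x in Ω, ((⨅ j, ‖x - y j‖) ^ 2 * ρ x + S.indicator q x) := by
        refine setIntegral_mono_on (henergy _) ((henergy y).add hqΩ) hΩm fun x hx => ?_
        have := mul_le_mul_of_nonneg_right (sq_iInf_norm_sub_update_le hx y k v t) (hρ0 x)
        rwa [add_mul, ← Set.indicator_mul_left] at this
    _ = _ := by
        rw [integral_add (henergy y) hqΩ, setIntegral_indicator hSm,
          Set.inter_eq_self_of_subset_right hSΩ, hq_int]
        rfl

lemma setIntegral_smul_sub_eq_zero_of_isLocalMin (hΩb : Bornology.IsBounded Ω)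
    (hΩm : MeasurableSet Ω) (hρ0 : ∀ x, 0 ≤ ρ x) (hρi : Integrable ρ)
    {y : Fin K → EuclideanSpace ℝ (Fin d)} (hmin : IsLocalMin (kMeansEnergy Ω ρ) y)
    (k : Fin K) : ∫ x in euclVoronoi Ω y k, ρ x • (x - y k) = 0 := by
  set w := ∫ x in euclVoronoi Ω y k, ρ x • (x - y k)
  have hcurve : IsLocalMin (fun t : ℝ => kMeansEnergy Ω ρ (update y k (y k + t • w))) 0 :=
    IsLocalMin.comp_continuous (f := kMeansEnergy Ω ρ) (b := 0)
      (by simpa using hmin) (by fun_prop)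
  have hquad : IsLocalMin (fun t : ℝ =>
      t ^ 2 * (‖w‖ ^ 2 * ∫ x in euclVoronoi Ω y k, ρ x) - 2 * t * ⟪w, w⟫) 0 := by
    filter_upwards [hcurve] with t ht
    have := kMeansEnergy_update_le hΩb hΩm hρ0 hρi y k w t
    simp only [zero_smul, add_zero, update_eq_self] at ht
    simp only [zero_pow two_ne_zero, zero_mul, mul_zero, sub_self]
    linarith
  exact inner_self_eq_zero.mp (eq_zero_of_isLocalMin_sq_mul_sub hquad)

end FirstVariation

theorem stmt_14_general (d K : ℕ)
    (Ω : Set (EuclideanSpace ℝ (Fin d)))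
    (hΩb : Bornology.IsBounded Ω) (hΩm : MeasurableSet Ω)
    (ρ : EuclideanSpace ℝ (Fin d) → ℝ) (hρ0 : ∀ x, 0 ≤ ρ x) (hρi : Integrable ρ)
    (y : Fin K → EuclideanSpace ℝ (Fin d))
    (hmin : IsLocalMin
      (fun z : Fin K → EuclideanSpace ℝ (Fin d) =>
        ∫ x in Ω, (⨅ k, ‖x - z k‖) ^ 2 * ρ x) y)
    (hpos : ∀ k, 0 < ∫ x in euclVoronoi Ω y k, ρ x) :
    ∀ k, y k = (∫ z in euclVoronoi Ω y k, ρ z)⁻¹ • ∫ z in euclVoronoi Ω y k, ρ z • z := by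
  intro k
  have hSm := measurableSet_euclVoronoi hΩm y k
  have hSb : Bornology.IsBounded (euclVoronoi Ω y k) := hΩb.subset fun x hx => hx.1
  have hcentroid := setIntegral_smul_sub_eq_zero_of_isLocalMin hΩb hΩm hρ0 hρi hmin k
  simp_rw [smul_sub] at hcentroid
  rw [integral_sub (hρi.integrableOn_smul_of_isBounded continuous_id' hSb hSm)
    (hρi.integrableOn.smul_const _), integral_smul_const, sub_eq_zero] at hcentroid
  rw [hcentroid, smul_smul, inv_mul_cancel₀ (hpos k).ne', one_smul]

theorem stmt_14 (d K : ℕ) (hd : 1 ≤ d) (hK : 0 < K)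
    (Ω : Set (EuclideanSpace ℝ (Fin d)))
    (hΩb : Bornology.IsBounded Ω) (hΩm : MeasurableSet Ω)
    (ρ : EuclideanSpace ℝ (Fin d) → ℝ) (hρ0 : ∀ x, 0 ≤ ρ x) (hρi : Integrable ρ)
    (y : Fin K → EuclideanSpace ℝ (Fin d))
    (hmin : IsLocalMin
      (fun z : Fin K → EuclideanSpace ℝ (Fin d) =>
        ∫ x in Ω, (⨅ k, ‖x - z k‖) ^ 2 * ρ x) y)
    (hpos : ∀ k, 0 < ∫ x in euclVoronoi Ω y k, ρ x) :
    ∀ k, y k = (∫ z in euclVoronoi Ω y k, ρ z)⁻¹ • ∫ z in euclVoronoi Ω y k, ρ z • z :=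
  stmt_14_general d K Ω hΩb hΩm ρ hρ0 hρi y hmin hpos
end

section
/- Let d ≥ 1, let Ω ⊆ ℝ^d be a bounded measurable set, let ρ : ℝ^d → ℝ be a nonnegative integrable function with associated measure π(A) = ∫_A ρ(x) dx, let dist : ℝ^d × ℝ^d → ℝ be a continuous nonnegative function, let y_1, …, y_K ∈ ℝ^d, and let c ∈ ℝ^K. For w ∈ ℝ^K define the tie-broken power cells V_k(w) = {x ∈ Ω : dist(x,y_k) − w_k ≤ dist(x,y_j) − w_j for all j, with strict inequality for all j < k}, and define F(w) = Σ_{k=1}^K ∫_{V_k(w)} dist(x,y_k) ρ(x) dx − Σ_{k=1}^K w_k (π(V_k(w)) − c_k). Then F is a concave function of w on ℝ^K. -/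
/-!
On the cell `V_k(w)` the integrand `dist(x, y_k) - w_k` equals the lower envelope
`min_j (dist(x, y_j) - w_j)`, and the cells partition `Ω`. Hence
`F(w) = ∫_Ω ρ(x) min_j (dist(x, y_j) - w_j) dx + ∑_k w_k c_k`: for each `x` the integrand is
a minimum of affine functions of `w` scaled by `ρ(x) ≥ 0`, so it is concave, integration
preserves concavity, and the remaining term is linear.
-/

open MeasureTheory

/-- The tie-broken power cell of the generator `y k` with weight `w k` in `Ω`: points of `Ω`
where `dst x (y k) - w k` is minimal among all generators, with ties assigned to the
smallest index. -/
def powerCell {d K : ℕ} (Ω : Set (EuclideanSpace ℝ (Fin d)))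
    (dst : EuclideanSpace ℝ (Fin d) → EuclideanSpace ℝ (Fin d) → ℝ)
    (y : Fin K → EuclideanSpace ℝ (Fin d)) (w : Fin K → ℝ) (k : Fin K) :
    Set (EuclideanSpace ℝ (Fin d)) :=
  {x ∈ Ω | (∀ j, dst x (y k) - w k ≤ dst x (y j) - w j) ∧
    ∀ j, j < k → dst x (y k) - w k < dst x (y j) - w j}

theorem ConcaveOn.ciInf {E ι : Type*} [AddCommGroup E] [Module ℝ E] [Finite ι] [Nonempty ι]
    {s : Set E} {f : ι → E → ℝ} (hf : ∀ i, ConcaveOn ℝ s (f i)) :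
    ConcaveOn ℝ s fun x => ⨅ i, f i x := by
  refine ⟨(hf (Classical.arbitrary ι)).1, fun x hx y hy a b ha hb hab => le_ciInf fun i => ?_⟩
  calc a • (⨅ i, f i x) + b • (⨅ i, f i y)
      ≤ a • f i x + b • f i y := by
        gcongr <;> exact ciInf_le (Finite.bddBelow_range _) i
    _ ≤ f i (a • x + b • y) := (hf i).2 hx hy ha hb hab

theorem concaveOn_integral {α E : Type*} [MeasurableSpace α] {μ : Measure α} [AddCommGroup E]
    [Module ℝ E] {s : Set E} {Φ : E → α → ℝ} (hs : Convex ℝ s)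
    (hΦ : ∀ᵐ x ∂μ, ConcaveOn ℝ s (Φ · x)) (hint : ∀ w ∈ s, Integrable (Φ w) μ) :
    ConcaveOn ℝ s fun w => ∫ x, Φ w x ∂μ := by
  refine ⟨hs, fun w hw v hv a b ha hb hab => ?_⟩
  simp only [smul_eq_mul, ← integral_const_mul]
  rw [← integral_add ((hint w hw).const_mul a) ((hint v hv).const_mul b)]
  exact integral_mono_ae (((hint w hw).const_mul a).add ((hint v hv).const_mul b))
    (hint _ (hs hw hv ha hb hab)) (hΦ.mono fun x hx => hx.2 hw hv ha hb hab)

section PowerCell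

open Function

variable {d K : ℕ} {Ω : Set (EuclideanSpace ℝ (Fin d))}
  {dst : EuclideanSpace ℝ (Fin d) → EuclideanSpace ℝ (Fin d) → ℝ}
  {y : Fin K → EuclideanSpace ℝ (Fin d)} {w : Fin K → ℝ} {k : Fin K}

theorem powerCell_subset : powerCell Ω dst y w k ⊆ Ω := fun _ hx => hx.1

theorem pairwise_disjoint_powerCell : Pairwise (Disjoint on powerCell Ω dst y w) := by
  intro k l hkl
  refine Set.disjoint_left.2 fun x hxk hxl => ?_
  rcases hkl.lt_or_gt with h | h
  · exact (hxl.2.2 k h).not_ge (hxk.2.1 l)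
  · exact (hxk.2.2 l h).not_ge (hxl.2.1 k)

theorem iUnion_powerCell [Nonempty (Fin K)] : ⋃ k, powerCell Ω dst y w k = Ω := by
  refine (Set.iUnion_subset fun k => powerCell_subset).antisymm fun x hx => ?_
  -- The lexicographic minimiser of `(dst x (y j) - w j, j)` is the cell the tie-break selects.
  obtain ⟨k, hk⟩ := Finite.exists_min fun j => toLex (dst x (y j) - w j, j)
  have hle : ∀ j, dst x (y k) - w k ≤ dst x (y j) - w j := fun j =>
    (Prod.Lex.le_iff.1 (hk j)).elim le_of_lt fun h => h.1.le
  refine Set.mem_iUnion.2 ⟨k, hx, hle, fun j hjk => (hle j).lt_of_ne fun heq => ?_⟩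
  exact (Prod.Lex.le_iff.1 (hk j)).elim (fun h => h.ne heq) fun h => h.2.not_gt hjk

theorem iInf_eq_of_mem_powerCell {x : EuclideanSpace ℝ (Fin d)}
    (hx : x ∈ powerCell Ω dst y w k) : ⨅ j, dst x (y j) - w j = dst x (y k) - w k :=
  have : Nonempty (Fin K) := ⟨k⟩
  (ciInf_le (Finite.bddBelow_range _) k).antisymm (le_ciInf hx.2.1)

theorem measurableSet_powerCell (hΩ : MeasurableSet Ω)
    (hdst : ∀ j, Measurable fun x => dst x (y j)) : MeasurableSet (powerCell Ω dst y w k) :=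
  hΩ.inter <| Measurable.setOf <|
    (Measurable.forall fun j => (measurableSet_le ((hdst k).sub_const (w k))
      ((hdst j).sub_const (w j))).mem).and
    (Measurable.forall fun j => Measurable.forall fun _ => (measurableSet_lt
      ((hdst k).sub_const (w k)) ((hdst j).sub_const (w j))).mem)

variable {ρ : EuclideanSpace ℝ (Fin d) → ℝ}

theorem eqOn_mul_iInf_powerCell :
    Set.EqOn (fun x => ρ x * ⨅ j, dst x (y j) - w j) (fun x => dst x (y k) * ρ x - w k * ρ x)
      (powerCell Ω dst y w k) := fun x hx => by
  simp only [iInf_eq_of_mem_powerCell hx]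
  ring

theorem integrableOn_mul_iInf_powerCell (hΩ : MeasurableSet Ω)
    (hdst : ∀ j, Measurable fun x => dst x (y j))
    (hdstρ : IntegrableOn (fun x => dst x (y k) * ρ x) Ω) (hρ : IntegrableOn ρ Ω) :
    IntegrableOn (fun x => ρ x * ⨅ j, dst x (y j) - w j) (powerCell Ω dst y w k) :=
  ((hdstρ.sub (hρ.const_mul (w k))).mono_set powerCell_subset).congr_fun
    eqOn_mul_iInf_powerCell.symm (measurableSet_powerCell hΩ hdst)

theorem integrableOn_mul_iInf [Nonempty (Fin K)] (hΩ : MeasurableSet Ω)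
    (hdst : ∀ j, Measurable fun x => dst x (y j))
    (hdstρ : ∀ k, IntegrableOn (fun x => dst x (y k) * ρ x) Ω) (hρ : IntegrableOn ρ Ω) :
    IntegrableOn (fun x => ρ x * ⨅ j, dst x (y j) - w j) Ω := by
  have := integrableOn_finite_iUnion.2 fun k =>
    integrableOn_mul_iInf_powerCell (w := w) hΩ hdst (hdstρ k) hρ
  rwa [iUnion_powerCell] at this

theorem setIntegral_powerCell_sub (hΩ : MeasurableSet Ω)
    (hdst : ∀ j, Measurable fun x => dst x (y j))
    (hdstρ : IntegrableOn (fun x => dst x (y k) * ρ x) Ω) (hρ : IntegrableOn ρ Ω) :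
    (∫ x in powerCell Ω dst y w k, dst x (y k) * ρ x) - w k * ∫ x in powerCell Ω dst y w k, ρ x
      = ∫ x in powerCell Ω dst y w k, ρ x * ⨅ j, dst x (y j) - w j := by
  rw [← integral_const_mul, ← integral_sub (hdstρ.mono_set powerCell_subset)
    ((hρ.mono_set powerCell_subset).const_mul _)]
  exact setIntegral_congr_fun (measurableSet_powerCell hΩ hdst) eqOn_mul_iInf_powerCell.symm

theorem sum_setIntegral_powerCell_sub [Nonempty (Fin K)] (hΩ : MeasurableSet Ω)
    (hdst : ∀ j, Measurable fun x => dst x (y j))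
    (hdstρ : ∀ k, IntegrableOn (fun x => dst x (y k) * ρ x) Ω) (hρ : IntegrableOn ρ Ω) :
    ∑ k, ((∫ x in powerCell Ω dst y w k, dst x (y k) * ρ x)
        - w k * ∫ x in powerCell Ω dst y w k, ρ x)
      = ∫ x in Ω, ρ x * ⨅ j, dst x (y j) - w j := by
  simp only [setIntegral_powerCell_sub hΩ hdst (hdstρ _) hρ]
  rw [← integral_iUnion_fintype (fun k => measurableSet_powerCell hΩ hdst)
    pairwise_disjoint_powerCell fun k => integrableOn_mul_iInf_powerCell hΩ hdst (hdstρ k) hρ,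
    iUnion_powerCell]

end PowerCell

theorem stmt_15_general (d K : ℕ) (hK : 0 < K)
    (Ω : Set (EuclideanSpace ℝ (Fin d)))
    (hΩb : Bornology.IsBounded Ω) (hΩm : MeasurableSet Ω)
    (ρ : EuclideanSpace ℝ (Fin d) → ℝ) (hρ0 : ∀ x, 0 ≤ ρ x) (hρi : Integrable ρ)
    (dst : EuclideanSpace ℝ (Fin d) → EuclideanSpace ℝ (Fin d) → ℝ)
    (hdstc : Continuous fun p : EuclideanSpace ℝ (Fin d) × EuclideanSpace ℝ (Fin d) => dst p.1 p.2)
    (y : Fin K → EuclideanSpace ℝ (Fin d)) (c : Fin K → ℝ) :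
    ConcaveOn ℝ Set.univ (fun w : Fin K → ℝ =>
      (∑ k, ∫ x in powerCell Ω dst y w k, dst x (y k) * ρ x)
      - ∑ k, w k * ((∫ x in powerCell Ω dst y w k, ρ x) - c k)) := by
  have : Nonempty (Fin K) := Fin.pos_iff_nonempty.mp hK
  have hdst : ∀ j, Continuous fun x => dst x (y j) := fun j =>
    hdstc.comp (continuous_id.prodMk continuous_const)
  have hdstρ : ∀ j, IntegrableOn (fun x => dst x (y j) * ρ x) Ω := fun j =>
    .continuousOn_mul_of_subset (hdst j).continuousOn hρi.integrableOn hΩb.isCompact_closure hΩm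
      subset_closure
  have hdstm : ∀ j, Measurable fun x => dst x (y j) := fun j => (hdst j).measurable
  have hF : ∀ w : Fin K → ℝ,
      (∑ k, ∫ x in powerCell Ω dst y w k, dst x (y k) * ρ x)
        - ∑ k, w k * ((∫ x in powerCell Ω dst y w k, ρ x) - c k)
      = (∫ x in Ω, ρ x * ⨅ j, dst x (y j) - w j) + ∑ k, w k * c k := fun w => by
    rw [← sum_setIntegral_powerCell_sub hΩm hdstm hdstρ hρi.integrableOn]
    simp only [mul_sub, Finset.sum_sub_distrib]
    ring
  simp only [hF]
  refine (concaveOn_integral convex_univ (ae_of_all _ fun x => ?_)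
    fun w _ => integrableOn_mul_iInf hΩm hdstm hdstρ hρi.integrableOn).add ?_
  · exact (ConcaveOn.ciInf fun j =>
      (concaveOn_const _ convex_univ).sub ((LinearMap.proj j).convexOn convex_univ)).smul (hρ0 x)
  · refine ((Fintype.linearCombination ℝ c).concaveOn convex_univ).congr fun w _ => ?_
    simp [Fintype.linearCombination_apply]

theorem stmt_15 (d K : ℕ) (hd : 1 ≤ d) (hK : 0 < K)
    (Ω : Set (EuclideanSpace ℝ (Fin d)))
    (hΩb : Bornology.IsBounded Ω) (hΩm : MeasurableSet Ω)
    (ρ : EuclideanSpace ℝ (Fin d) → ℝ) (hρ0 : ∀ x, 0 ≤ ρ x) (hρi : Integrable ρ)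
    (dst : EuclideanSpace ℝ (Fin d) → EuclideanSpace ℝ (Fin d) → ℝ)
    (hdstc : Continuous fun p : EuclideanSpace ℝ (Fin d) × EuclideanSpace ℝ (Fin d) => dst p.1 p.2)
    (hdst0 : ∀ x y, 0 ≤ dst x y)
    (y : Fin K → EuclideanSpace ℝ (Fin d)) (c : Fin K → ℝ) :
    ConcaveOn ℝ Set.univ (fun w : Fin K → ℝ =>
      (∑ k, ∫ x in powerCell Ω dst y w k, dst x (y k) * ρ x)
      - ∑ k, w k * ((∫ x in powerCell Ω dst y w k, ρ x) - c k)) :=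
  stmt_15_general d K hK Ω hΩb hΩm ρ hρ0 hρi dst hdstc y c
end

section
/- Let n ≥ 1, let ε > 0, let μ ∈ ℝ^n, and let Σ be a real symmetric positive definite n×n matrix. Define u : ℝ^n → ℝ by u(x) = (ε/2) (x − μ)·(Σ⁻¹(x − μ)). Then u is smooth, its gradient is ∇u(x) = ε Σ⁻¹(x − μ), the sum of its second partial derivatives (Laplacian) is Δu(x) = ε tr(Σ⁻¹) for all x, and u solves the ergodic Hamilton–Jacobi–Bellman equation −ε Δu(x) + (1/2)‖∇u(x)‖² + ε² tr(Σ⁻¹) = (ε²/2) (x − μ)·((Σ⁻¹)ᵀ Σ⁻¹ (x − μ)) for all x ∈ ℝ^n. -/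
open Matrix

noncomputable section

variable {n : ℕ}

local notation "E" n => EuclideanSpace ℝ (Fin n)

namespace Stmt19Aux

noncomputable def T (A : Matrix (Fin n) (Fin n) ℝ) :
    EuclideanSpace ℝ (Fin n) →L[ℝ] EuclideanSpace ℝ (Fin n) :=
  LinearMap.toContinuousLinearMap (Matrix.toEuclideanLin A)

lemma T_apply (A : Matrix (Fin n) (Fin n) ℝ) (x : EuclideanSpace ℝ (Fin n)) (i : Fin n) :
    T A x i = A.mulVec (fun j => x j) i := rfl

lemma inner_T (A : Matrix (Fin n) (Fin n) ℝ) (x y : EuclideanSpace ℝ (Fin n)) :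
    inner ℝ x (T A y) = (fun i => x i) ⬝ᵥ A.mulVec (fun j => y j) := by
  simp [PiLp.inner_apply, T_apply, dotProduct, RCLike.inner_apply]
  exact Finset.sum_congr rfl fun _ _ => mul_comm _ _

lemma T_symm {A : Matrix (Fin n) (Fin n) ℝ} (hA : A.IsSymm)
    (x y : EuclideanSpace ℝ (Fin n)) :
    (inner ℝ x (T A y) : ℝ) = inner ℝ y (T A x) := by
  rw [inner_T, inner_T]
  conv_lhs => rw [Matrix.dotProduct_mulVec, ← hA.eq, Matrix.vecMul_transpose]
  rw [dotProduct_comm]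


lemma hasGradientAt_u {A : Matrix (Fin n) (Fin n) ℝ} (hA : A.IsSymm) (ε : ℝ)
    (μ x : EuclideanSpace ℝ (Fin n)) :
    HasGradientAt (fun z => (ε / 2) * inner ℝ (z - μ) (T A (z - μ)))
      (ε • T A (x - μ)) x := by
  rw [hasGradientAt_iff_hasFDerivAt]
  have hg : HasFDerivAt (fun z : EuclideanSpace ℝ (Fin n) => z - μ)
      (ContinuousLinearMap.id ℝ _) x := (hasFDerivAt_id x).sub_const μ
  have hT : HasFDerivAt (fun z : EuclideanSpace ℝ (Fin n) => T A (z - μ)) (T A) x := by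
    simpa [Function.comp_def, map_sub] using (T A).hasFDerivAt.comp x hg
  have h := (hg.inner ℝ hT).const_mul (ε / 2)
  refine h.congr_fderiv ?_
  ext v
  rw [InnerProductSpace.toDual_apply_apply, real_inner_smul_left]
  simp only [ContinuousLinearMap.comp_apply, ContinuousLinearMap.smul_apply,
    ContinuousLinearMap.prod_apply, ContinuousLinearMap.coe_id', id_eq,
    fderivInnerCLM_apply, smul_eq_mul]
  rw [T_symm hA (x - μ) v, real_inner_comm (T A (x - μ)) v]
  ring


lemma fderiv_u {A : Matrix (Fin n) (Fin n) ℝ} (hA : A.IsSymm) (ε : ℝ)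
    (μ z v : EuclideanSpace ℝ (Fin n)) :
    fderiv ℝ (fun z => (ε / 2) * inner ℝ (z - μ) (T A (z - μ))) z v
      = ε * inner ℝ (T A (z - μ)) v := by
  rw [(hasGradientAt_u hA ε μ z).hasFDerivAt.fderiv, InnerProductSpace.toDual_apply_apply,
    real_inner_smul_left]

lemma T_single_diag (A : Matrix (Fin n) (Fin n) ℝ) (i : Fin n) :
    T A (EuclideanSpace.single i 1) i = A i i := by
  simp [T_apply, Matrix.mulVec, dotProduct, EuclideanSpace.single_apply]

lemma second_deriv {A : Matrix (Fin n) (Fin n) ℝ} (hA : A.IsSymm) (ε : ℝ)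
    (μ x : EuclideanSpace ℝ (Fin n)) (i : Fin n) :
    fderiv ℝ (fun z => fderiv ℝ (fun z => (ε / 2) * inner ℝ (z - μ) (T A (z - μ))) z
        (EuclideanSpace.single i 1)) x (EuclideanSpace.single i 1) = ε * A i i := by
  set e : EuclideanSpace ℝ (Fin n) := EuclideanSpace.single i 1
  have hg : HasFDerivAt (fun z : EuclideanSpace ℝ (Fin n) => z - μ)
      (ContinuousLinearMap.id ℝ _) x := (hasFDerivAt_id x).sub_const μ
  have h1 : HasFDerivAt (fun z : EuclideanSpace ℝ (Fin n) => (inner ℝ e (T A (z - μ)) : ℝ))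
      ((innerSL ℝ e).comp (T A)) x := by
    exact (((innerSL ℝ e).comp (T A)).hasFDerivAt.comp x hg).congr_fderiv
      (ContinuousLinearMap.comp_id _)
  have h2 := (h1.const_mul ε).fderiv
  have h3 : (fun z => fderiv ℝ (fun z => (ε / 2) * inner ℝ (z - μ) (T A (z - μ))) z e)
      = fun z => ε * (inner ℝ e (T A (z - μ)) : ℝ) := by
    funext z
    rw [fderiv_u hA ε μ z e, real_inner_comm]
  rw [h3, h2]
  simp only [ContinuousLinearMap.smul_apply, ContinuousLinearMap.comp_apply,
    innerSL_apply_apply, smul_eq_mul]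
  rw [show (inner ℝ e (T A e) : ℝ) = T A e i by
    rw [show e = EuclideanSpace.single i 1 from rfl, EuclideanSpace.inner_single_left]; simp,
    show T A e i = A i i from T_single_diag A i]

end Stmt19Aux

end

open Stmt19Aux
theorem stmt_19 (n : ℕ) (hn : 1 ≤ n) (ε : ℝ) (hε : 0 < ε)
    (μ : EuclideanSpace ℝ (Fin n)) (S : Matrix (Fin n) (Fin n) ℝ)
    (hSsymm : S.IsSymm) (hSpd : S.PosDef) :
    -- `u(x) = (ε/2) (x − μ)·(Σ⁻¹(x − μ))`
    let u : EuclideanSpace ℝ (Fin n) → ℝ := fun x =>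
      (ε / 2) * ((fun i => x i - μ i) ⬝ᵥ S⁻¹.mulVec fun i => x i - μ i)
    -- the Laplacian as the sum of the second partial derivatives
    let lap : (EuclideanSpace ℝ (Fin n) → ℝ) → EuclideanSpace ℝ (Fin n) → ℝ := fun f x =>
      ∑ i, fderiv ℝ (fun z => fderiv ℝ f z (EuclideanSpace.single i 1)) x
        (EuclideanSpace.single i 1)
    ContDiff ℝ (⊤ : ℕ∞) u ∧
    (∀ x, gradient u x = (WithLp.toLp 2 (ε • S⁻¹.mulVec fun i => x i - μ i) : EuclideanSpace ℝ (Fin n))) ∧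
    (∀ x, lap u x = ε * S⁻¹.trace) ∧
    (∀ x, -ε * lap u x + (1 / 2) * ‖gradient u x‖ ^ 2 + ε ^ 2 * S⁻¹.trace
        = (ε ^ 2 / 2) * ((fun i => x i - μ i) ⬝ᵥ (S⁻¹ᵀ * S⁻¹).mulVec fun i => x i - μ i)) := by
  intro u lap
  have hA : (S⁻¹).IsSymm := by
    show (S⁻¹)ᵀ = S⁻¹
    rw [Matrix.transpose_nonsing_inv, hSsymm.eq]
  have hu : u = fun x => (ε / 2) * (inner ℝ (x - μ) (T S⁻¹ (x - μ)) : ℝ) := by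
    funext x
    show (ε / 2) * _ = _
    rw [inner_T]
    rfl
  have hlap : ∀ (f : EuclideanSpace ℝ (Fin n) → ℝ) x, lap f x
      = ∑ i, fderiv ℝ (fun z => fderiv ℝ f z (EuclideanSpace.single i 1)) x
        (EuclideanSpace.single i 1) := fun f x => rfl
  have hgrad : ∀ x, gradient u x = ε • T S⁻¹ (x - μ) := by
    intro x
    rw [hu]
    exact (hasGradientAt_u hA ε μ x).gradient
  have hlapu : ∀ x, lap u x = ε * S⁻¹.trace := by
    intro x
    rw [hlap, hu]
    simp_rw [second_deriv hA ε μ x]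
    rw [← Finset.mul_sum, Matrix.trace]
    rfl
  refine ⟨?_, ?_, hlapu, ?_⟩
  · rw [hu]
    exact contDiff_const.mul (((contDiff_id.sub contDiff_const)).inner ℝ
      ((T S⁻¹).contDiff.comp (contDiff_id.sub contDiff_const)))
  · intro x
    rw [hgrad]
    rfl
  · intro x
    rw [hlapu, hgrad, norm_smul, mul_pow]
    have h1 : ‖T S⁻¹ (x - μ)‖ ^ 2
        = ((S⁻¹.mulVec fun i => x i - μ i) ⬝ᵥ S⁻¹.mulVec fun i => x i - μ i) := by
      rw [← real_inner_self_eq_norm_sq, inner_T]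
      rfl
    have h2 : ((fun i => x i - μ i) ⬝ᵥ (S⁻¹ᵀ * S⁻¹).mulVec fun i => x i - μ i)
        = ((S⁻¹.mulVec fun i => x i - μ i) ⬝ᵥ S⁻¹.mulVec fun i => x i - μ i) := by
      rw [← Matrix.mulVec_mulVec, Matrix.dotProduct_mulVec, Matrix.vecMul_transpose]
    rw [h1, h2]
    have : ‖ε‖ = ε := abs_of_pos hε
    rw [this]
    ring
end
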